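/- arXiv:2601.17556 — 3 statements merged into one kernel-verified Lean document; each statement's English description precedes it below -/
import Mathlib

section
/- Under the grid-covering hypothesis (D is L_D-Lipschitz, G is an h-net of P with L_D · h < 1, and distinct binary images are at distance ≥ 1), the forward reachable set of D over P equals the image of G under D: {D(p) : p ∈ P} = {D(g) : g ∈ G}. -/
/-- Exactness of the grid-sampled reachable set: under the grid-covering
hypotheses, the forward reachable set of `D` over the whole pose space equals
the image of the finite grid `G` under `D`. -/
theorem grid_reachable_set_exact
    {P Img : Type*} [MetricSpace P] [MetricSpace Img]
    (D : P → Img) (L_D h : ℝ)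
    (hD : ∀ p q : P, dist (D p) (D q) ≤ L_D * dist p q)
    (hquant : ∀ I₁ I₂ : Img, dist I₁ I₂ < 1 → I₁ = I₂)
    (G : Set P) (hG : G.Finite)
    (hnet : ∀ p : P, ∃ g ∈ G, dist p g ≤ h)
    (hstep : L_D * h < 1) :
    Set.range D = D '' G := by
  apply Set.Subset.antisymm
  · rintro _ ⟨p, rfl⟩
    obtain ⟨g, hgG, hpg⟩ := hnet p
    have hd : dist (D p) (D g) < 1 := by
      have := hD p g
      have h0 : (0:ℝ) ≤ dist p g := dist_nonneg
      rcases le_or_gt 0 L_D with hL | hL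
      · nlinarith
      · nlinarith
    exact ⟨g, hgG, (hquant _ _ hd).symm⟩
  · rintro _ ⟨g, _, rfl⟩
    exact ⟨g, rfl⟩
end

section
/- Completeness of detection: let D : P_T → I be L_D-Lipschitz into binary images (distinct images at distance ≥ 1), let E satisfy the certified bound d(p, E(D(p))) ≤ R for all p ∈ P_T, and let G be an h-net of the ball B(E(I), R) ∩ P_T with L_D · h < 1. If I = D(p) for some p ∈ P_T, then there exists g ∈ G with D(g) = I. -/
/-- Completeness of detection (Theorem 2(b)): if the encoder satisfies the
certified bound with radius `R` on `P_T`, `G` is an `h`-net of the certified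
ball `B(E I, R) ∩ P_T` with `L_D * h < 1`, images at distance `< 1` coincide,
and `I = D p` for some `p ∈ P_T`, then some grid point reproduces `I` exactly. -/
theorem detection_completeness
    {P Img : Type*} [MetricSpace P] [MetricSpace Img]
    (D : P → Img) (E : Img → P) (P_T : Set P) (L_D h R : ℝ)
    (hD : ∀ p q : P, dist (D p) (D q) ≤ L_D * dist p q)
    (hquant : ∀ I₁ I₂ : Img, dist I₁ I₂ < 1 → I₁ = I₂)
    (hcert : ∀ p ∈ P_T, dist p (E (D p)) ≤ R)
    (I : Img) (G : Set P)
    (hnet : ∀ q ∈ Metric.closedBall (E I) R ∩ P_T, ∃ g ∈ G, dist q g ≤ h)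
    (hstep : L_D * h < 1)
    (p : P) (hp : p ∈ P_T) (hI : I = D p) :
    ∃ g ∈ G, D g = I := by
  have hpball : p ∈ Metric.closedBall (E I) R ∩ P_T := by
    refine ⟨?_, hp⟩
    rw [Metric.mem_closedBall, dist_comm, dist_comm (E I) p]
    simpa [hI] using hcert p hp
  obtain ⟨g, hgG, hdg⟩ := hnet p hpball
  refine ⟨g, hgG, ?_⟩
  have h1 : dist (D g) (D p) < 1 := by
    have hL := hD g p
    have hd := dist_nonneg (x := g) (y := p)
    rw [dist_comm] at hdg
    rcases le_or_gt 0 L_D with h0 | h0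
    · calc dist (D g) (D p) ≤ L_D * dist g p := hL
        _ ≤ L_D * h := by nlinarith
        _ < 1 := hstep
    · nlinarith
  exact (hquant _ _ h1).trans hI.symm
end

section
/- Pipeline uniqueness under spatial isolation: under the hypotheses of Theorem 3 with n̄ = 0 (the mask M_{i*} fully excludes clutter, so I ⊙ M_{i*} = D(p)), and with the non-aliasing partition condition and detector soundness/completeness, the pipeline returns exactly one estimate p̂*, and ‖p − p̂*‖ ≤ (δ + η)(L_D L_E + 1) + ε. -/
/-- Pipeline uniqueness under spatial isolation (Theorem 3, uniqueness part):
with `n̄ = 0` the mask `M i⋆` fully excludes the clutter, so the filtered image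
equals `D p`; combined with the non-aliasing partition condition and detector
soundness/completeness, the pipeline returns exactly one estimate `p̂⋆`, and
`‖p - p̂⋆‖ ≤ (δ + η) * (L_D * L_E + 1) + ε`. -/
theorem pipeline_uniqueness
    {Pose : Type*} [NormedAddCommGroup Pose]
    {Pixel : Type*} [Fintype Pixel]
    {ι : Type*}
    (D : Pose → Pixel → ℝ) (E : (Pixel → ℝ) → Pose)
    (Part : ι → Set Pose) (M : ι → Pixel → ℝ)
    (Det : ι → (Pixel → ℝ) → Prop)
    (L_D L_E δ η ε : ℝ)
    (p : Pose) (istar : ι) (hp : p ∈ Part istar)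
    (C : Pixel → ℝ)  -- clutter image I_C
    (hbinD : ∀ q x, D q x = 0 ∨ D q x = 1)
    (hbinM : ∀ k x, M k x = 0 ∨ M k x = 1)
    (hbinC : ∀ x, C x = 0 ∨ C x = 1)
    -- mask preservation at the true pose
    (hMpres : ∀ x, D p x * M istar x = D p x)
    -- spatial isolation (`n̄ = 0`): the mask fully excludes the clutter
    (hclutter : ∀ x, C x * M istar x = 0)
    -- non-aliasing: no other branch's masked image is reachable in its cell
    (hnonalias : ∀ k, k ≠ istar →
      (fun x => max (D p x) (C x) * M k x) ∉ {J | ∃ q ∈ Part k, J = D q})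
    -- detector soundness and completeness
    (hDetS : ∀ (k : ι) (J : Pixel → ℝ), Det k J → ∃ q ∈ Part k, J = D q)
    (hDetC : ∀ (k : ι) (J : Pixel → ℝ), (∃ q ∈ Part k, J = D q) → Det k J)
    -- noiseless certified encoder bound
    (hE : ∀ q : Pose, ‖q - E (D q)‖ ≤ (δ + η) * (L_D * L_E + 1) + ε) :
    ∃ phat : Pose,
      ({phat' | ∃ k, Det k (fun x => max (D p x) (C x) * M k x) ∧
          phat' = E (fun x => max (D p x) (C x) * M k x)} : Set Pose) = {phat} ∧
      ‖p - phat‖ ≤ (δ + η) * (L_D * L_E + 1) + ε := by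
  have hfilter : (fun x => max (D p x) (C x) * M istar x) = D p := by
    funext x
    rcases hbinM istar x with hm | hm
    · have h1 := hMpres x
      rw [hm, mul_zero] at h1 ⊢
      exact h1.symm ▸ rfl
    · rw [hm, mul_one]
      have hD : D p x = D p x * M istar x := (hMpres x).symm
      have hC : C x = 0 := by have := hclutter x; rwa [hm, mul_one] at this
      rw [hC]
      rcases hbinD p x with h | h <;> simp [h]
  refine ⟨E (D p), ?_, hE p⟩
  ext y
  simp only [Set.mem_setOf_eq, Set.mem_singleton_iff]
  constructor
  · rintro ⟨k, hdet, rfl⟩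
    by_cases hk : k = istar
    · subst hk; rw [hfilter]
    · exact absurd (hDetS k _ hdet) (hnonalias k hk)
  · rintro rfl
    exact ⟨istar, hDetC istar _ ⟨p, hp, hfilter⟩, by rw [hfilter]⟩
end
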